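/- Let M be a number field that is Galois over ℚ with Galois group isomorphic to (ℤ/2ℤ)². For each totally real quadratic subfield K of M let ε_K be a fundamental unit of K, i.e. a unit of O_K such that ε_K together with −1 generates O_K^×. Let 𝕌* ⊆ O_M^× be the subgroup generated by the roots of unity of M together with all the ε_K. Then 𝕌* has finite index in O_M^×, and this index divides 8. -/

import Mathlib

/-!
For a unit `u` of `M` and `σ ≠ 1` in the Galois group, `u * σ u` is fixed by `σ`, hence is a unit of
the quadratic field fixed by `σ`: up to sign a power of `ε_K` if that field is real, a root of unity
if it is imaginary. As `u ^ 2 * N(u) = ∏_{σ ≠ 1} u * σ u` and `N(u) = ±1`, every square of a unit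
lies in `𝕌*`. So `O_M^× / 𝕌*` is an `𝔽₂`-vector space spanned by the images of a fundamental system
of units, which has at most `3` members because `[M : ℚ] = 4`.
-/

open NumberField

-- Galois groups act on `(𝓞 L)ˣ` through their action on `𝓞 L`.
attribute [local instance] Units.mulDistribMulActionRight

lemma natCard_dvd_two_pow_of_span_eq_top {V : Type*} [AddCommGroup V] [Module (ZMod 2) V]
    {r : ℕ} (q : Fin r → V) (hq : Submodule.span (ZMod 2) (Set.range q) = ⊤) :
    Nat.card V ∣ 2 ^ r := by
  have hsurj : Function.Surjective (Fintype.linearCombination (ZMod 2) q) := by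
    rw [← LinearMap.range_eq_top, Fintype.range_linearCombination, hq]
  simpa using
    AddSubgroup.card_dvd_of_surjective (Fintype.linearCombination (ZMod 2) q).toAddMonoidHom hsurj

lemma Subgroup.index_dvd_two_pow_of_sq_mem {G : Type*} [CommGroup G] {H : Subgroup G}
    (hsq : ∀ g : G, g ^ 2 ∈ H) {r : ℕ} (f : Fin r → G)
    (hgen : Subgroup.closure (Set.range f) ⊔ H = ⊤) : H.index ∣ 2 ^ r := by
  let : Module (ZMod 2) (Additive (G ⧸ H)) := AddCommGroup.zmodModule fun x => by
    obtain ⟨g, hg⟩ := QuotientGroup.mk_surjective x.toMul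
    rw [← ofMul_toMul x, ← hg]
    exact (QuotientGroup.eq_one_iff _).mpr (hsq g)
  refine natCard_dvd_two_pow_of_span_eq_top (V := Additive (G ⧸ H))
    (fun i => Additive.ofMul (QuotientGroup.mk (f i) : G ⧸ H)) ?_
  refine Submodule.eq_top_iff'.mpr fun x => ?_
  obtain ⟨g, hg⟩ := QuotientGroup.mk_surjective x.toMul
  obtain ⟨z, hz, h, hh, rfl⟩ := Subgroup.mem_sup.mp (hgen ▸ Subgroup.mem_top g)
  rw [← ofMul_toMul x, ← hg, QuotientGroup.mk_mul, (QuotientGroup.eq_one_iff h).mpr hh, mul_one]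
  clear hg
  induction hz using Subgroup.closure_induction with
  | mem _ hy => obtain ⟨i, rfl⟩ := hy; exact Submodule.subset_span ⟨i, rfl⟩
  | one => exact zero_mem _
  | mul _ _ _ _ ha hb => exact add_mem ha hb
  | inv _ _ ha => exact neg_mem ha

namespace IntermediateField

variable {F E : Type*} [Field F] [Field E] [Algebra F E]

lemma mem_fixedField_zpowers_iff (σ : E ≃ₐ[F] E) (x : E) :
    x ∈ fixedField (Subgroup.zpowers σ) ↔ σ x = x := by
  rw [mem_fixedField_iff, Subgroup.forall_mem_zpowers]
  exact MulAction.mem_fixedBy_zpowers_iff_mem_fixedBy (g := σ) (a := x)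

lemma mul_apply_mem_fixedField_zpowers {σ : E ≃ₐ[F] E} (hσ : σ * σ = 1) (x : E) :
    x * σ x ∈ fixedField (Subgroup.zpowers σ) := by
  rw [mem_fixedField_zpowers_iff, map_mul, ← AlgEquiv.mul_apply, hσ, AlgEquiv.one_apply, mul_comm]

lemma finrank_fixedField_zpowers_mul_orderOf [FiniteDimensional F E] (σ : E ≃ₐ[F] E) :
    Module.finrank F (fixedField (Subgroup.zpowers σ)) * orderOf σ = Module.finrank F E := by
  rw [← Nat.card_zpowers, ← finrank_fixedField_eq_card, Module.finrank_mul_finrank]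

end IntermediateField

namespace NumberField.Units

variable {K : Type*} [Field K] [NumberField K]

lemma rank_lt_finrank : rank K < Module.finrank ℚ K := by
  have := InfinitePlace.card_add_two_mul_card_eq_rank K
  have := InfinitePlace.card_eq_nrRealPlaces_add_nrComplexPlaces K
  have := Module.finrank_pos (R := ℚ) (M := K)
  rw [rank]
  omega

lemma rank_eq_zero_of_finrank_eq_two (h2 : Module.finrank ℚ K = 2) (hK : IsEmpty (K →+* ℝ)) :
    rank K = 0 := by
  have hreal : InfinitePlace.nrRealPlaces K = 0 := nrRealPlaces_eq_zero_iff.mpr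
    ⟨fun w => InfinitePlace.not_isReal_iff_isComplex.mp
      fun hw => hK.elim (InfinitePlace.embedding_of_isReal hw)⟩
  have := InfinitePlace.card_add_two_mul_card_eq_rank K
  rw [rank, InfinitePlace.card_eq_nrRealPlaces_add_nrComplexPlaces]
  omega

lemma isOfFinOrder_of_rank_eq_zero (h : rank K = 0) (u : (𝓞 K)ˣ) : IsOfFinOrder u := by
  have : IsEmpty (Fin (rank K)) := by rw [h]; infer_instance
  obtain ⟨⟨ζ, e⟩, rfl, -⟩ := exist_unique_eq_mul_prod K u
  simpa using (CommGroup.mem_torsion (ζ : (𝓞 K)ˣ)).mp ζ.2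

variable {L : Type*} [Field L] [NumberField L]

lemma exists_algebraMap_eq_of_coe_mem (K : IntermediateField ℚ L) (u : (𝓞 L)ˣ)
    (hu : (u : L) ∈ K) : ∃ v : (𝓞 K)ˣ, algebraMap (𝓞 K) (𝓞 L) v = u := by
  have hint : IsIntegral ℤ (⟨u, hu⟩ : K) :=
    (isIntegral_algebraMap_iff (FaithfulSMul.algebraMap_injective K L)).mp u.val.isIntegral_coe
  have hy : algebraMap (𝓞 K) (𝓞 L) ⟨⟨u, hu⟩, hint⟩ = u := RingOfIntegers.ext rfl
  have hunit : IsUnit (⟨⟨u, hu⟩, hint⟩ : 𝓞 K) :=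
    IsUnit.of_map (algebraMap (𝓞 K) (𝓞 L)) _ (by rw [hy]; exact u.isUnit)
  exact ⟨hunit.unit, hy⟩

lemma isOfFinOrder_of_coe_mem {K : IntermediateField ℚ L} (hK : rank K = 0) (u : (𝓞 L)ˣ)
    (hu : (u : L) ∈ K) : IsOfFinOrder u := by
  obtain ⟨v, hv⟩ := exists_algebraMap_eq_of_coe_mem K u hu
  have : u = Units.map (algebraMap (𝓞 K) (𝓞 L)).toMonoidHom v := Units.ext hv.symm
  rw [this]
  exact MonoidHom.isOfFinOrder _ (isOfFinOrder_of_rank_eq_zero hK v)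

lemma prod_smul_eq_one_or_eq_neg_one [IsGalois ℚ L] (u : (𝓞 L)ˣ) :
    ∏ σ : L ≃ₐ[ℚ] L, σ • u = 1 ∨ ∏ σ : L ≃ₐ[ℚ] L, σ • u = -1 := by
  have hprod : ((∏ σ : L ≃ₐ[ℚ] L, σ • u : (𝓞 L)ˣ) : L) =
      algebraMap ℚ L (Algebra.norm ℚ (u : L)) := by
    rw [Algebra.norm_eq_prod_automorphisms, Units.coe_prod, map_prod]
    rfl
  rcases abs_eq (zero_le_one' ℚ) |>.mp (Units.norm L u) with h | h
  · exact .inl <| coe_injective L <| by simp only [hprod, h, map_one]; rfl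
  · exact .inr <| coe_injective L <| by simp only [hprod, h, map_neg, map_one]; rfl

end NumberField.Units

lemma card_eq_four_of_mulEquiv {G : Type*} [Group G] [Fintype G]
    (e : G ≃* Multiplicative (ZMod 2) × Multiplicative (ZMod 2)) : Fintype.card G = 4 := by
  rw [Fintype.card_congr e.toEquiv]
  rfl

lemma mul_self_eq_one_of_mulEquiv {G : Type*} [Group G]
    (e : G ≃* Multiplicative (ZMod 2) × Multiplicative (ZMod 2)) (σ : G) : σ * σ = 1 :=
  e.injective <| by
    rw [map_mul, map_one]
    generalize e σ = a
    revert a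
    decide

lemma sq_mem_of_prod_smul_mem {G A : Type*} [Group G] [Fintype G] [CommGroup A] [MulAction G A]
    (hG : Fintype.card G = 4) {H : Subgroup A} {u : A}
    (hprod : ∏ σ : G, σ • u ∈ H) (hmul : ∀ σ : G, σ ≠ 1 → u * σ • u ∈ H) : u ^ 2 ∈ H := by
  classical
  have hcard : (Finset.univ.erase (1 : G)).card = 3 := by
    rw [Finset.card_erase_of_mem (Finset.mem_univ _), Finset.card_univ, hG]
  have key : u ^ 2 * ∏ σ : G, σ • u = ∏ σ ∈ Finset.univ.erase (1 : G), u * σ • u := by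
    rw [Finset.prod_mul_distrib, Finset.prod_const, hcard,
      ← Finset.mul_prod_erase Finset.univ _ (Finset.mem_univ 1), one_smul,
      ← mul_assoc, ← pow_succ]
  rw [eq_mul_inv_of_mul_eq key]
  exact mul_mem (prod_mem fun σ hσ => hmul σ (Finset.ne_of_mem_erase hσ)) (inv_mem hprod)

lemma mem_of_coe_mem_of_finrank_eq_two {M : Type*} [Field M] [NumberField M]
    {J : Set (IntermediateField ℚ M)}
    (hJ : J = {K : IntermediateField ℚ M | Module.finrank ℚ K = 2 ∧ Nonempty (K →+* ℝ)})
    (ε : J → (𝓞 M)ˣ)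
    (hfund : ∀ (K : J) (u : (𝓞 M)ˣ), ((u : 𝓞 M) : M) ∈ (K : IntermediateField ℚ M) →
      ∃ n : ℤ, u = (ε K) ^ n ∨ u = -((ε K) ^ n))
    {H : Subgroup (𝓞 M)ˣ} (htors : ∀ u : (𝓞 M)ˣ, IsOfFinOrder u → u ∈ H) (hε : ∀ K, ε K ∈ H)
    {K : IntermediateField ℚ M} (hK : Module.finrank ℚ K = 2) {v : (𝓞 M)ˣ} (hv : (v : M) ∈ K) :
    v ∈ H := by
  by_cases hreal : Nonempty (K →+* ℝ)
  · obtain ⟨n, rfl | rfl⟩ := hfund ⟨K, hJ ▸ ⟨hK, hreal⟩⟩ v hv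
    · exact zpow_mem (hε _) n
    · rw [neg_eq_neg_one_mul]
      exact mul_mem (htors _ (isOfFinOrder_iff_pow_eq_one.mpr ⟨2, two_pos, by simp⟩))
        (zpow_mem (hε _) n)
  · exact htors v (Units.isOfFinOrder_of_coe_mem
      (Units.rank_eq_zero_of_finrank_eq_two hK (not_nonempty_iff.mp hreal)) v hv)

theorem statement_11_general (M : Type*) [Field M] [NumberField M] [IsGalois ℚ M]
    (hgal : Nonempty ((M ≃ₐ[ℚ] M) ≃* (Multiplicative (ZMod 2) × Multiplicative (ZMod 2))))
    (J : Set (IntermediateField ℚ M))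
    (hJ : J = {K : IntermediateField ℚ M | Module.finrank ℚ K = 2 ∧ Nonempty (K →+* ℝ)})
    (ε : J → (𝓞 M)ˣ)
    -- `ε K` together with `−1` generates the group of units of `O_K`, identified with the
    -- units of `O_M` lying in `K`:
    (hfund : ∀ (K : J) (u : (𝓞 M)ˣ), ((u : 𝓞 M) : M) ∈ (K : IntermediateField ℚ M) →
      ∃ n : ℤ, u = (ε K) ^ n ∨ u = -((ε K) ^ n)) :
    (Subgroup.closure ({u : (𝓞 M)ˣ | ∃ n : ℕ, 1 ≤ n ∧ u ^ n = 1} ∪ Set.range ε)).index ≠ 0 ∧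
    (Subgroup.closure ({u : (𝓞 M)ˣ | ∃ n : ℕ, 1 ≤ n ∧ u ^ n = 1} ∪ Set.range ε)).index ∣ 8 := by
  obtain ⟨e⟩ := hgal
  set H := Subgroup.closure ({u : (𝓞 M)ˣ | ∃ n : ℕ, 1 ≤ n ∧ u ^ n = 1} ∪ Set.range ε)
  have htors : ∀ u : (𝓞 M)ˣ, IsOfFinOrder u → u ∈ H := fun u hu =>
    Subgroup.subset_closure (.inl (isOfFinOrder_iff_pow_eq_one.mp hu))
  have hcard := card_eq_four_of_mulEquiv e
  have hinv := mul_self_eq_one_of_mulEquiv e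
  have hdeg : Module.finrank ℚ M = 4 := by
    rw [← IsGalois.card_aut_eq_finrank, Nat.card_eq_fintype_card, hcard]
  have hsq : ∀ u : (𝓞 M)ˣ, u ^ 2 ∈ H := by
    intro u
    refine sq_mem_of_prod_smul_mem hcard ?_ fun σ hσ => ?_
    · refine htors _ (isOfFinOrder_iff_pow_eq_one.mpr ⟨2, two_pos, ?_⟩)
      rcases Units.prod_smul_eq_one_or_eq_neg_one u with h | h <;> simp [h]
    · have horder : orderOf σ = 2 := orderOf_eq_prime (by rw [sq, hinv]) hσ
      have hK := IntermediateField.finrank_fixedField_zpowers_mul_orderOf σ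
      rw [horder, hdeg] at hK
      exact mem_of_coe_mem_of_finrank_eq_two hJ ε hfund htors
        (fun K => Subgroup.subset_closure (.inr ⟨K, rfl⟩)) (by omega)
        (IntermediateField.mul_apply_mem_fixedField_zpowers (hinv σ) (u : M))
  have htorsion : Units.torsion M ≤ H := fun u hu => htors u ((CommGroup.mem_torsion u).mp hu)
  have hrank : Units.rank M ≤ 3 := by
    have := Units.rank_lt_finrank (K := M)
    omega
  have hdvd : H.index ∣ 8 :=
    (Subgroup.index_dvd_two_pow_of_sq_mem hsq (Units.fundSystem M)
      (eq_top_mono (sup_le_sup_left htorsion _)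
        (Units.closure_fundSystem_sup_torsion_eq_top M))).trans (pow_dvd_pow 2 hrank)
  exact ⟨fun h => by simp [h] at hdvd, hdvd⟩

theorem statement_11 (M : Type*) [Field M] [NumberField M] [IsGalois ℚ M]
    (hgal : Nonempty ((M ≃ₐ[ℚ] M) ≃* (Multiplicative (ZMod 2) × Multiplicative (ZMod 2))))
    (J : Set (IntermediateField ℚ M))
    (hJ : J = {K : IntermediateField ℚ M | Module.finrank ℚ K = 2 ∧ Nonempty (K →+* ℝ)})
    (ε : J → (𝓞 M)ˣ)
    (hmem : ∀ K : J, ((ε K : 𝓞 M) : M) ∈ (K : IntermediateField ℚ M))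
    -- `ε K` together with `−1` generates the group of units of `O_K`, identified with the
    -- units of `O_M` lying in `K`:
    (hfund : ∀ (K : J) (u : (𝓞 M)ˣ), ((u : 𝓞 M) : M) ∈ (K : IntermediateField ℚ M) →
      ∃ n : ℤ, u = (ε K) ^ n ∨ u = -((ε K) ^ n)) :
    (Subgroup.closure ({u : (𝓞 M)ˣ | ∃ n : ℕ, 1 ≤ n ∧ u ^ n = 1} ∪ Set.range ε)).index ≠ 0 ∧
    (Subgroup.closure ({u : (𝓞 M)ˣ | ∃ n : ℕ, 1 ≤ n ∧ u ^ n = 1} ∪ Set.range ε)).index ∣ 8 :=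
  statement_11_general M hgal J hJ ε hfund
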